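/- Let (k_j)_{j≥1} be a sequence of even natural numbers with k_1 ≥ 6 and k_{j+1} - k_j ≥ 6 for all j. Define a_0 = a_1 = 1, a_k = 2 if k = k_j or k = k_j + 2 for some j, and a_k = 4 otherwise. Then for the convergents s_k/t_k of [a_0,a_1,...], all t_k are odd and the Jacobi symbol (s_k/t_k) equals -1 if k = k_j for some j, and equals 1 otherwise. -/

import Mathlib

/-!
Each convergent satisfies `s_{n+1} t_n ≡ (-1)^n (mod t_{n+1})`, so `(s_{n+1}/t_{n+1})` equals
`(-1/t_{n+1})^n` as soon as `(t_n/t_{n+1}) = 1`. The latter holds along the whole sequence by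
reciprocity and `t_{n+2} ≡ t_n (mod t_{n+1})`, provided no two consecutive `t_n` are `3 mod 4`.
For the construction, reducing `t_{n+2} = a_{n+2} t_{n+1} + t_n` mod 4 shows that `t_n ≡ 3 (mod 4)`
exactly at `n = k_j`: the partial quotient `2` at `k_j` switches the residue to `3`, the one at
`k_j + 2` switches it back, and `4` leaves it unchanged. Since `k_j` is even, `(-1/t_{k_j})^{k_j-1} = -1`.
-/

/-- Numerators of continued fraction convergents: `cfS a k = s_k`
(with `s_{-1} = 1`, `s_0 = a_0`, `s_k = a_k s_{k-1} + s_{k-2}`). -/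
def cfS (a : ℕ → ℤ) : ℕ → ℤ
  | 0 => a 0
  | 1 => a 1 * a 0 + 1
  | (k+2) => a (k+2) * cfS a (k+1) + cfS a k

/-- Denominators of continued fraction convergents: `cfT a k = t_k`
(with `t_{-1} = 0`, `t_0 = 1`, `t_k = a_k t_{k-1} + t_{k-2}`). -/
def cfT (a : ℕ → ℤ) : ℕ → ℤ
  | 0 => 1
  | 1 => a 1
  | (k+2) => a (k+2) * cfT a (k+1) + cfT a k

theorem odd_of_emod_four_eq_ite {x : ℤ} {p : Prop} [Decidable p]
    (h : x % 4 = if p then 3 else 1) : Odd x := by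
  split_ifs at h <;> exact Int.odd_iff.mpr (by omega)

theorem jacobiSym_add_mul_natAbs (x k y : ℤ) :
    jacobiSym (x + k * y) y.natAbs = jacobiSym x y.natAbs := by
  have hdvd : (y.natAbs : ℤ) ∣ k * y := (Int.natAbs_dvd.mpr dvd_rfl).mul_left k
  simpa using jacobiSym.mod_left' ((Int.modEq_zero_iff_dvd.mpr hdvd).add_left x)

theorem jacobiSym_comm_of_emod_four {x y : ℤ} (hx : 0 < x) (hy : 0 < y)
    (hxo : Odd x) (hyo : Odd y) (h : x % 4 = 1 ∨ y % 4 = 1) :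
    jacobiSym x y.natAbs = jacobiSym y x.natAbs := by
  lift x to ℕ using hx.le
  lift y to ℕ using hy.le
  simp only [Int.natAbs_natCast] at *
  rcases h with h | h
  · exact jacobiSym.quadratic_reciprocity_one_mod_four (by omega) (Int.odd_coe_nat _ |>.mp hyo)
  · exact jacobiSym.quadratic_reciprocity_one_mod_four' (Int.odd_coe_nat _ |>.mp hxo) (by omega)

section Convergents

variable {a : ℕ → ℤ}

theorem cfS_cfT_determinant (n : ℕ) :
    cfS a (n+1) * cfT a n - cfT a (n+1) * cfS a n = (-1) ^ n := by
  induction n with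
  | zero => simp only [cfS, cfT]; ring
  | succ n ih =>
    simp only [cfS, cfT] at ih ⊢
    linear_combination (-1 : ℤ) * ih

theorem cfT_pos (ha : ∀ n, 0 < a (n+1)) (n : ℕ) : 0 < cfT a n := by
  induction n using Nat.twoStepInduction with
  | zero => simp [cfT]
  | one => simpa [cfT] using ha 0
  | more n ih₀ ih₁ =>
    have := ha (n+1)
    simp only [cfT]
    positivity

theorem jacobiSym_cfT_cfT_succ (ha : ∀ n, 0 < a (n+1)) (hodd : ∀ n, Odd (cfT a n))
    (h : ∀ n, cfT a n % 4 = 1 ∨ cfT a (n+1) % 4 = 1) (n : ℕ) :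
    jacobiSym (cfT a n) (cfT a (n+1)).natAbs = 1 := by
  induction n with
  | zero => simp [cfT, jacobiSym.one_left]
  | succ n ih =>
    calc jacobiSym (cfT a (n+1)) (cfT a (n+2)).natAbs
        = jacobiSym (cfT a (n+2)) (cfT a (n+1)).natAbs :=
          jacobiSym_comm_of_emod_four (cfT_pos ha _) (cfT_pos ha _) (hodd _) (hodd _) (h _)
      _ = jacobiSym (cfT a n + a (n+2) * cfT a (n+1)) (cfT a (n+1)).natAbs := by
          rw [cfT, add_comm]
      _ = 1 := by rw [jacobiSym_add_mul_natAbs, ih]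

theorem jacobiSym_cfS_succ {n : ℕ} (h : jacobiSym (cfT a n) (cfT a (n+1)).natAbs = 1) :
    jacobiSym (cfS a (n+1)) (cfT a (n+1)).natAbs = jacobiSym (-1) (cfT a (n+1)).natAbs ^ n := by
  calc jacobiSym (cfS a (n+1)) (cfT a (n+1)).natAbs
      = jacobiSym (cfS a (n+1) * cfT a n) (cfT a (n+1)).natAbs := by
        rw [jacobiSym.mul_left, h, mul_one]
    _ = jacobiSym ((-1) ^ n + cfS a n * cfT a (n+1)) (cfT a (n+1)).natAbs := by
        rw [← cfS_cfT_determinant]; ring_nf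
    _ = jacobiSym (-1) (cfT a (n+1)).natAbs ^ n := by
        rw [jacobiSym_add_mul_natAbs, jacobiSym.pow_left]

theorem cfT_emod_four {P : ℕ → Prop} [DecidablePred P] (hP0 : ¬P 0) (hP1 : ¬P 1)
    (hsep : ∀ n, P n → ¬P (n+2)) (ha1 : a 1 = 1)
    (ha2 : ∀ n, P n ∨ P (n+2) → a (n+2) = 2) (ha4 : ∀ n, ¬(P n ∨ P (n+2)) → a (n+2) = 4)
    (n : ℕ) : cfT a n % 4 = if P n then 3 else 1 := by
  induction n using Nat.twoStepInduction with
  | zero => simp [cfT, hP0]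
  | one => simp [cfT, hP1, ha1]
  | more n ih₀ ih₁ =>
    have ht₁ : cfT a (n+1) % 4 = 1 ∨ cfT a (n+1) % 4 = 3 := by split_ifs at ih₁ <;> omega
    rw [cfT]
    by_cases hn : P n
    · rw [ha2 n (.inl hn), if_neg (hsep n hn)]
      rw [if_pos hn] at ih₀
      omega
    by_cases hn₂ : P (n+2)
    · rw [ha2 n (.inr hn₂), if_pos hn₂]
      rw [if_neg hn] at ih₀
      omega
    · rw [ha4 n (by tauto), if_neg hn₂]
      rw [if_neg hn] at ih₀
      omega

theorem jacobiSym_cfS_cfT_of_emod_four {P : ℕ → Prop} [DecidablePred P] (ha : ∀ n, 0 < a (n+1))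
    (hP : ∀ n, P n → Even n) (hmod : ∀ n, cfT a n % 4 = if P n then 3 else 1) (n : ℕ) :
    jacobiSym (cfS a (n+1)) (cfT a (n+1)).natAbs = if P (n+1) then -1 else 1 := by
  have hodd (n : ℕ) : Odd (cfT a n) := odd_of_emod_four_eq_ite (hmod n)
  have hnot_both_three (n : ℕ) : cfT a n % 4 = 1 ∨ cfT a (n+1) % 4 = 1 := by
    by_cases hn : P n
    · refine .inr ?_
      rw [hmod, if_neg fun h => Nat.not_even_iff_odd.mpr (hP n hn).add_one (hP _ h)]
    · exact .inl (by rw [hmod, if_neg hn])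
  have ht := hmod (n+1)
  have := cfT_pos ha (n+1)
  rw [jacobiSym_cfS_succ (jacobiSym_cfT_cfT_succ ha hodd hnot_both_three n),
    jacobiSym.at_neg_one (Int.natAbs_odd.mpr (hodd _))]
  split_ifs at ht ⊢ with hn
  · have hm : Odd n := Nat.not_even_iff_odd.mp (Nat.even_add_one.mp (hP _ hn))
    rw [ZMod.χ₄_nat_three_mod_four (by omega), hm.neg_one_pow]
  · rw [ZMod.χ₄_nat_one_mod_four (by omega), one_pow]

end Convergents

section GapSix

variable {k : ℕ → ℕ}

theorem add_six_le_apply_of_lt (hgap : ∀ j, 1 ≤ j → k j + 6 ≤ k (j+1))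
    {i j : ℕ} (hi : 1 ≤ i) (hij : i < j) : k i + 6 ≤ k j := by
  induction j, hij using Nat.le_induction with
  | base => exact hgap i hi
  | succ j hij ih => have := hgap j (by omega); omega

theorem six_le_apply (h1 : 6 ≤ k 1) (hgap : ∀ j, 1 ≤ j → k j + 6 ≤ k (j+1))
    {j : ℕ} (hj : 1 ≤ j) : 6 ≤ k j := by
  rcases hj.eq_or_lt with rfl | hj
  · exact h1
  · have := add_six_le_apply_of_lt hgap le_rfl hj; omega

theorem apply_ne_apply_add_two (hgap : ∀ j, 1 ≤ j → k j + 6 ≤ k (j+1))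
    {i j : ℕ} (hi : 1 ≤ i) (hj : 1 ≤ j) : k i ≠ k j + 2 := by
  rcases lt_trichotomy i j with h | rfl | h
  · have := add_six_le_apply_of_lt hgap hi h; omega
  · omega
  · have := add_six_le_apply_of_lt hgap hj h; omega

end GapSix

theorem jacobi_sequence_minus_one_at_kj_construction_general
    (kseq : ℕ → ℕ) (heven : ∀ j, 1 ≤ j → Even (kseq j)) (h1 : 6 ≤ kseq 1)
    (hgap : ∀ j, 1 ≤ j → kseq j + 6 ≤ kseq (j+1))
    (a : ℕ → ℤ) (ha1 : a 1 = 1)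
    (ha2 : ∀ n, 2 ≤ n → (∃ j, 1 ≤ j ∧ (n = kseq j ∨ n = kseq j + 2)) → a n = 2)
    (ha4 : ∀ n, 2 ≤ n → ¬(∃ j, 1 ≤ j ∧ (n = kseq j ∨ n = kseq j + 2)) → a n = 4) :
    ∀ n, Odd (cfT a n) ∧
      ((∃ j, 1 ≤ j ∧ n = kseq j) → jacobiSym (cfS a n) (cfT a n).natAbs = -1) ∧
      (¬(∃ j, 1 ≤ j ∧ n = kseq j) → jacobiSym (cfS a n) (cfT a n).natAbs = 1) := by
  classical
  set P : ℕ → Prop := fun n => ∃ j, 1 ≤ j ∧ n = kseq j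
  have hPeven : ∀ n, P n → Even n := by rintro n ⟨j, hj, rfl⟩; exact heven j hj
  have hP0 : ¬P 0 := by rintro ⟨j, hj, hj0⟩; have := six_le_apply h1 hgap hj; omega
  have hP1 : ¬P 1 := fun h => Nat.not_even_one (hPeven 1 h)
  have hsep : ∀ n, P n → ¬P (n+2) := by
    rintro n ⟨i, hi, rfl⟩ ⟨j, hj, hij⟩
    exact apply_ne_apply_add_two hgap hj hi hij.symm
  have hshift (n : ℕ) : (∃ j, 1 ≤ j ∧ (n+2 = kseq j ∨ n+2 = kseq j + 2)) ↔ P n ∨ P (n+2) := by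
    simp only [P, add_left_inj, ← exists_or, ← and_or_left, or_comm]
  have ha2' (n : ℕ) (h : P n ∨ P (n+2)) : a (n+2) = 2 := ha2 _ (by omega) ((hshift n).mpr h)
  have ha4' (n : ℕ) (h : ¬(P n ∨ P (n+2))) : a (n+2) = 4 :=
    ha4 _ (by omega) (mt (hshift n).mp h)
  have hpos : ∀ n, 0 < a (n+1) := by
    rintro (_ | n)
    · simp [ha1]
    · by_cases h : P n ∨ P (n+2) <;> simp [ha2', ha4', h]
  have hmod := cfT_emod_four hP0 hP1 hsep ha1 ha2' ha4'
  rintro (_ | n)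
  · exact ⟨odd_of_emod_four_eq_ite (hmod 0), fun h => absurd h hP0, fun _ => jacobiSym.one_right _⟩
  · have hJ := jacobiSym_cfS_cfT_of_emod_four hpos hPeven hmod n
    refine ⟨odd_of_emod_four_eq_ite (hmod _), fun hn => ?_, fun hn => ?_⟩
    · rwa [if_pos hn] at hJ
    · rwa [if_neg hn] at hJ

theorem jacobi_sequence_minus_one_at_kj_construction
    (kseq : ℕ → ℕ) (heven : ∀ j, 1 ≤ j → Even (kseq j)) (h1 : 6 ≤ kseq 1)
    (hgap : ∀ j, 1 ≤ j → kseq j + 6 ≤ kseq (j+1))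
    (a : ℕ → ℤ) (ha0 : a 0 = 1) (ha1 : a 1 = 1)
    (ha2 : ∀ n, 2 ≤ n → (∃ j, 1 ≤ j ∧ (n = kseq j ∨ n = kseq j + 2)) → a n = 2)
    (ha4 : ∀ n, 2 ≤ n → ¬(∃ j, 1 ≤ j ∧ (n = kseq j ∨ n = kseq j + 2)) → a n = 4) :
    ∀ n, Odd (cfT a n) ∧
      ((∃ j, 1 ≤ j ∧ n = kseq j) → jacobiSym (cfS a n) (cfT a n).natAbs = -1) ∧
      (¬(∃ j, 1 ≤ j ∧ n = kseq j) → jacobiSym (cfS a n) (cfT a n).natAbs = 1) :=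
  jacobi_sequence_minus_one_at_kj_construction_general kseq heven h1 hgap a ha1 ha2 ha4
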